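/- arXiv:2401.12825 — 8 statements merged into one kernel-verified Lean document; each statement's English description precedes it below -/
import Mathlib

section
/- Let P be a poset regarded as a category, let F : C ⥤ P be a functor, let W_P be the class of morphisms f of C such that F.map f is an isomorphism, and let L : C ⥤ D be a localization of C at W_P. Then any functor G : D ⥤ P equipped with a natural isomorphism L ⋙ G ≅ F is conservative (reflects isomorphisms). -/
open CategoryTheory

/-!
Consider the morphisms `f` of `D` at which `G` reflects isomorphisms. Because `P` is thin, a
composite is invertible there only if both factors are, so these morphisms form a multiplicative
class; it contains every `L.map f` (through `L ⋙ G ≅ F`, the morphism `f` lies in `W_P`) and the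
formal inverses of these. By the induction principle for localizations it is therefore everything.
-/

namespace CategoryTheory

lemma isIso_of_isIso_comp_of_thin {E : Type*} [Category E] [Quiver.IsThin E] {X Y Z : E}
    (f : X ⟶ Y) (g : Y ⟶ Z) [IsIso (f ≫ g)] : IsIso f ∧ IsIso g :=
  ⟨(iso_of_both_ways f (g ≫ inv (f ≫ g))).isIso_hom,
    (iso_of_both_ways g (inv (f ≫ g) ≫ f)).isIso_hom⟩

namespace Functor

variable {C D E : Type*} [Category C] [Category D] [Category E]

def isoReflecting (G : D ⥤ E) : MorphismProperty D :=
  fun _ _ f => IsIso (G.map f) → IsIso f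

lemma isoReflecting_of_isIso (G : D ⥤ E) {X Y : D} (f : X ⟶ Y) [IsIso f] :
    G.isoReflecting f :=
  fun _ => inferInstance

instance (G : D ⥤ E) : G.isoReflecting.RespectsIso :=
  MorphismProperty.RespectsIso.of_respects_arrow_iso _ fun _ _ e hf hg =>
    ((MorphismProperty.isomorphisms D).arrow_iso_iff e).1
      (hf (((MorphismProperty.isomorphisms E).arrow_iso_iff (G.mapArrow.mapIso e)).2 hg))

instance [Quiver.IsThin E] (G : D ⥤ E) : G.isoReflecting.IsMultiplicative where
  id_mem X := G.isoReflecting_of_isIso (𝟙 X)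
  comp_mem f g hf hg h := by
    rw [G.map_comp] at h
    obtain ⟨hGf, hGg⟩ := isIso_of_isIso_comp_of_thin (G.map f) (G.map g)
    have := hf hGf
    have := hg hGg
    infer_instance

lemma reflectsIsomorphisms_of_isLocalization [Quiver.IsThin E] (L : C ⥤ D)
    (W : MorphismProperty C) [L.IsLocalization W] (G : D ⥤ E)
    (hW : ∀ ⦃X Y : C⦄ (f : X ⟶ Y), IsIso (G.map (L.map f)) → W f) :
    G.ReflectsIsomorphisms := by
  have hG : G.isoReflecting = ⊤ :=
    Localization.morphismProperty_eq_top L W _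
      (fun _ _ f hf => Localization.inverts L W f (hW f hf))
      (fun _ _ _ _ => G.isoReflecting_of_isIso _)
  exact ⟨fun f hf => (hG ▸ trivial : G.isoReflecting f) hf⟩

end Functor

end CategoryTheory

/-- Let `F : C ⥤ P` be a functor to a poset, `W_P` the class of morphisms inverted by `F`,
and `L : C ⥤ D` a localization of `C` at `W_P`. Then any functor `G : D ⥤ P` with
`L ⋙ G ≅ F` is conservative. -/
theorem conservative_of_localization_over_poset
    {C : Type*} [Category C] {D : Type*} [Category D]
    {P : Type*} [PartialOrder P]
    (F : C ⥤ P) (L : C ⥤ D) (G : D ⥤ P)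
    (hL : L.IsLocalization (fun _ _ f => IsIso (F.map f)))
    (e : L ⋙ G ≅ F) :
    G.ReflectsIsomorphisms :=
  L.reflectsIsomorphisms_of_isLocalization (fun _ _ f => IsIso (F.map f)) G
    fun _ _ f => (NatIso.isIso_map_iff e f).1
end

section
/- Let P be a poset regarded as a category, F : C ⥤ P a functor, W_P the class of morphisms f of C with F.map f an isomorphism, L : C ⥤ D a localization of C at W_P, and G : D ⥤ P a functor with a natural isomorphism L ⋙ G ≅ F. Let S ⊆ P be an ord-connected subset. Let C_S (resp. D_S) be the full subcategory of C (resp. D) spanned by the objects whose image under F (resp. G) lies in S, and let W_S be the class of morphisms f of C_S whose image under F is an isomorphism. Then the functor C_S ⥤ D_S induced by L (which carries C_S into D_S, since G(L X) = F(X) by antisymmetry of the partial order) is a localization of C_S at W_S. -/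
/-!
Let `Z` be the objects of `D` lying over `S` and `U` those lying over the upper closure of `S`.
A functor `K` out of the full subcategory on `Z` extends to `D ⥤ Eᵒᵖ ⥤ Type`: send `x` to
`Hom(-, K x)` on `Z`, to the terminal presheaf on `U \ Z` and to the empty presheaf off `U`.
Since `Z` is convex this is functorial, and restricted to `Z` it is `K` followed by Yoneda.
The same construction on `C`, applied to a functor `H` out of `C_S` inverting `W_S`, inverts `W`;
so it descends to `D`, where its restriction to `D_S` is representable and hence extends `H`
along `C_S ⥤ D_S`. Conversely, precomposing the extension of `K` with `L` gives the extension of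
`K` restricted to `C_S`, so an isomorphism between restrictions to `C_S` lifts to `D` by the
universal property of `L`, and then to `D_S` through Yoneda. These two facts make the comparison
functor from the localization of `C_S` to `D_S` an equivalence.
-/

universe u v

noncomputable section

namespace CategoryTheory

namespace ObjectProperty

variable {C : Type*} [Category C]

/-- `Z` is `U` intersected with a property closed under predecessors, the categorical form of a
locally closed subset of a poset. -/
structure IsLocallyClosedIn (Z U : ObjectProperty C) : Prop where
  le : Z ≤ U
  up ⦃X Y : C⦄ (f : X ⟶ Y) : U X → U Y
  down ⦃X Y : C⦄ (f : X ⟶ Y) : U X → Z Y → Z X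

namespace IsLocallyClosedIn

variable {Z U : ObjectProperty C} (h : Z.IsLocallyClosedIn U)
include h

lemma inverseImage {D : Type*} [Category D] (F : D ⥤ C) :
    (Z.inverseImage F).IsLocallyClosedIn (U.inverseImage F) where
  le X := h.le (F.obj X)
  up _ _ f := h.up (F.map f)
  down _ _ f := h.down (F.map f)

lemma up_iff_of_iso {X Y : C} (e : X ≅ Y) : U X ↔ U Y :=
  ⟨h.up e.hom, h.up e.inv⟩

lemma prop_iff_of_iso {X Y : C} (e : X ≅ Y) : Z X ↔ Z Y :=
  ⟨fun hX => h.down e.inv (h.up e.hom (h.le X hX)) hX,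
    fun hY => h.down e.hom (h.up e.inv (h.le Y hY)) hY⟩

variable {E : Type u} [Category.{v} E]

omit h in
variable (Z U) in
def extensionObj (K : Z.FullSubcategory ⥤ E) (X : C) : Eᵒᵖ ⥤ Type v where
  obj a := PLift (U X) × ((hX : Z X) → (a.unop ⟶ K.obj ⟨X, hX⟩))
  map g := ↾fun p => (p.1, fun hX => g.unop ≫ p.2 hX)
  map_id _ := by
    ext ⟨u, φ⟩
    · rfl
    · exact Category.id_comp _
  map_comp _ _ := by
    ext ⟨u, φ⟩
    · rfl
    · exact Category.assoc _ _ _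

def extensionMap (K : Z.FullSubcategory ⥤ E) {X Y : C} (f : X ⟶ Y) :
    extensionObj Z U K X ⟶ extensionObj Z U K Y where
  app _ := ↾fun p => (⟨h.up f p.1.down⟩,
    fun hY => p.2 (h.down f p.1.down hY) ≫ K.map (homMk f))
  naturality _ _ _ := by
    ext ⟨u, φ⟩
    exact Prod.ext rfl (funext fun _ => Category.assoc _ _ _)

def extension (K : Z.FullSubcategory ⥤ E) : C ⥤ Eᵒᵖ ⥤ Type v where
  obj := extensionObj Z U K
  map := h.extensionMap K
  map_id _ := by
    ext _ ⟨u, φ⟩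
    exact Prod.ext rfl (funext fun _ => (congrArg _ (K.map_id _)).trans (Category.comp_id _))
  map_comp f g := by
    ext _ ⟨u, φ⟩
    refine Prod.ext rfl (funext fun _ => ?_)
    change _ ≫ _ = (_ ≫ _) ≫ _
    rw [Category.assoc, ← K.map_comp]
    rfl

def extensionMapOfNatTrans {K₁ K₂ : Z.FullSubcategory ⥤ E} (σ : K₁ ⟶ K₂) :
    h.extension K₁ ⟶ h.extension K₂ where
  app X :=
    { app _ := ↾fun p => (p.1, fun hX => p.2 hX ≫ σ.app _)
      naturality _ _ _ := by
        ext ⟨u, φ⟩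
        exact Prod.ext rfl (funext fun _ => Category.assoc _ _ _) }
  naturality _ _ f := by
    ext _ ⟨u, φ⟩
    refine Prod.ext rfl (funext fun _ => ?_)
    change (_ ≫ _) ≫ _ = (_ ≫ _) ≫ _
    rw [Category.assoc, Category.assoc, σ.naturality]

def extensionFunctor : (Z.FullSubcategory ⥤ E) ⥤ C ⥤ Eᵒᵖ ⥤ Type v where
  obj := h.extension
  map := h.extensionMapOfNatTrans
  map_id _ := by
    ext _ _ ⟨u, φ⟩
    exact Prod.ext rfl (funext fun _ => Category.comp_id _)
  map_comp _ _ := by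
    ext _ _ ⟨u, φ⟩
    exact Prod.ext rfl (funext fun _ => (Category.assoc _ _ _).symm)

def ιCompExtensionIso (K : Z.FullSubcategory ⥤ E) : Z.ι ⋙ h.extension K ≅ K ⋙ yoneda :=
  NatIso.ofComponents fun X => NatIso.ofComponents fun _ =>
    { hom := ↾fun p => p.2 X.property
      inv := ↾fun φ => (⟨h.le _ X.property⟩, fun _ => φ) }

lemma isIso_extension_map (K : Z.FullSubcategory ⥤ E) {X Y : C} (f : X ⟶ Y)
    (hU : U Y → U X) (hZ : Z X → Z Y)
    (hK : ∀ hX hY, IsIso (K.map (homMk f : (⟨X, hX⟩ : Z.FullSubcategory) ⟶ ⟨Y, hY⟩))) :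
    IsIso ((h.extension K).map f) := by
  rw [NatTrans.isIso_iff_isIso_app]
  intro a
  rw [isIso_iff_bijective]
  constructor
  · rintro ⟨⟨u⟩, φ⟩ ⟨⟨u'⟩, φ'⟩ e
    refine Prod.ext rfl (funext fun hX => ?_)
    have := hK hX (hZ hX)
    exact (cancel_mono (K.map (homMk f : (⟨X, hX⟩ : Z.FullSubcategory) ⟶ ⟨Y, hZ hX⟩))).1
      (congrArg (fun p : PLift (U Y) × ((hY : Z Y) → (a.unop ⟶ K.obj ⟨Y, hY⟩)) =>
        p.2 (hZ hX)) e)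
  · rintro ⟨u, φ⟩
    refine ⟨(⟨hU u.down⟩, fun hX =>
      have := hK hX (hZ hX)
      φ (hZ hX) ≫ inv (K.map (homMk f))), Prod.ext rfl (funext fun hY => ?_)⟩
    have := hK (h.down f (hU u.down) hY) hY
    change (φ hY ≫ inv (K.map _)) ≫ K.map _ = φ hY
    simp

end IsLocallyClosedIn
end ObjectProperty

variable {C D : Type*} [Category C] [Category D]

def Functor.restrict (L : C ⥤ D) (Z : ObjectProperty D) :
    (Z.inverseImage L).FullSubcategory ⥤ Z.FullSubcategory :=
  Z.lift ((Z.inverseImage L).ι ⋙ L) fun X => X.property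

namespace ObjectProperty.IsLocallyClosedIn

variable (L : C ⥤ D) (W : MorphismProperty C) [L.IsLocalization W]
  {Z U : ObjectProperty D} (h : Z.IsLocallyClosedIn U) {E : Type u} [Category.{v} E]

def isoOfRestrictCompIso {K₁ K₂ : Z.FullSubcategory ⥤ E}
    (e : L.restrict Z ⋙ K₁ ≅ L.restrict Z ⋙ K₂) : K₁ ≅ K₂ :=
  let e' : h.extension K₁ ≅ h.extension K₂ :=
    (Localization.fullyFaithfulWhiskeringLeft L W _).preimageIso
      ((h.inverseImage L).extensionFunctor.mapIso e)
  (Yoneda.fullyFaithful.whiskeringRight _).preimageIso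
    ((h.ιCompExtensionIso K₁).symm ≪≫ Functor.isoWhiskerLeft Z.ι e' ≪≫
      h.ιCompExtensionIso K₂)

lemma isInvertedBy_extension (H : (Z.inverseImage L).FullSubcategory ⥤ E)
    (hH : (W.inverseImage (Z.inverseImage L).ι).IsInvertedBy H) :
    W.IsInvertedBy ((h.inverseImage L).extension H) := fun _ _ w hw =>
  have : IsIso (L.map w) := Localization.inverts L W w hw
  (h.inverseImage L).isIso_extension_map H w
    (h.up_iff_of_iso (asIso (L.map w))).2 (h.prop_iff_of_iso (asIso (L.map w))).1
    fun _ _ => hH _ hw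

variable (H : (Z.inverseImage L).FullSubcategory ⥤ E)
  (hH : (W.inverseImage (Z.inverseImage L).ι).IsInvertedBy H)

abbrev extensionLift : D ⥤ Eᵒᵖ ⥤ Type v :=
  Localization.lift _ (h.isInvertedBy_extension L W H hH) L

lemma extensionLift_obj_mem_essImage (x : Z.FullSubcategory) :
    yoneda.essImage ((h.extensionLift L W H hH).obj x.obj) := by
  have := Localization.essSurj L W
  let e := L.objObjPreimageIso x.obj
  have hX : Z (L.obj (L.objPreimage x.obj)) := (h.prop_iff_of_iso e).2 x.property
  exact ⟨H.obj ⟨_, hX⟩,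
    ⟨((h.inverseImage L).ιCompExtensionIso H).symm.app ⟨_, hX⟩ ≪≫
      (Localization.fac _ (h.isInvertedBy_extension L W H hH) L).symm.app _ ≪≫
      (h.extensionLift L W H hH).mapIso e⟩⟩

def extendAlongRestrict : Z.FullSubcategory ⥤ E :=
  Functor.essImage.liftFunctor (Z.ι ⋙ h.extensionLift L W H hH) yoneda
    (h.extensionLift_obj_mem_essImage L W H hH)

def restrictCompExtendAlongRestrictIso : L.restrict Z ⋙ h.extendAlongRestrict L W H hH ≅ H :=
  (Yoneda.fullyFaithful.whiskeringRight _).preimageIso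
    (Functor.associator _ _ _ ≪≫
      Functor.isoWhiskerLeft _ (Functor.essImage.liftFunctorCompIso _ _ _) ≪≫
      Functor.isoWhiskerLeft (Z.inverseImage L).ι
        (Localization.fac _ (h.isInvertedBy_extension L W H hH) L) ≪≫
      (h.inverseImage L).ιCompExtensionIso H)

include h in
theorem isLocalization_restrict :
    (L.restrict Z).IsLocalization (W.inverseImage (Z.inverseImage L).ι) := by
  let W' := W.inverseImage (Z.inverseImage L).ι
  have hW' : W'.IsInvertedBy (L.restrict Z) := fun _ _ f hf =>
    have : IsIso (Z.ι.map ((L.restrict Z).map f)) := Localization.inverts L W _ hf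
    isIso_of_fully_faithful Z.ι _
  let comparison := Localization.lift _ hW' W'.Q
  let R := h.extendAlongRestrict L W W'.Q (Localization.inverts _ _)
  let eR : L.restrict Z ⋙ R ≅ W'.Q := h.restrictCompExtendAlongRestrictIso L W _ _
  let unit : 𝟭 _ ≅ comparison ⋙ R :=
    (Localization.fullyFaithfulWhiskeringLeft W'.Q W' _).preimageIso
      (W'.Q.rightUnitor ≪≫ eR.symm ≪≫
        Functor.isoWhiskerRight (Localization.fac _ hW' W'.Q).symm R ≪≫
        Functor.associator _ _ _)
  let counit : R ⋙ comparison ≅ 𝟭 _ := h.isoOfRestrictCompIso L W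
    ((Functor.associator _ _ _).symm ≪≫ Functor.isoWhiskerRight eR comparison ≪≫
      Localization.fac _ hW' W'.Q ≪≫ (L.restrict Z).rightUnitor.symm)
  exact Functor.IsLocalization.of_equivalence_target W'.Q W' _
    (Equivalence.mk comparison R unit counit) (Localization.fac _ hW' W'.Q)

include h in
theorem isLocalization_lift (Z' : ObjectProperty C) (hZ' : ∀ X, Z' X ↔ Z (L.obj X)) :
    (Z.lift (Z'.ι ⋙ L) fun X => (hZ' X.obj).1 X.property).IsLocalization
      (W.inverseImage Z'.ι) := by
  obtain rfl : Z' = Z.inverseImage L := funext fun X => propext (hZ' X)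
  exact h.isLocalization_restrict L W

end ObjectProperty.IsLocallyClosedIn

end CategoryTheory

end

open CategoryTheory

lemma Set.OrdConnected.isLocallyClosedIn_upperClosure {P : Type*} [PartialOrder P] {S : Set P}
    (hS : S.OrdConnected) :
    ObjectProperty.IsLocallyClosedIn (C := P) (· ∈ S) (· ∈ upperClosure S) where
  le _ hp := subset_upperClosure hp
  up _ _ f := (upperClosure S).upper f.le
  down _ _ f := fun ⟨_, hs, hsp⟩ hq => hS.out hs hq ⟨hsp, f.le⟩

/-- Strata of localizations: if `L : C ⥤ D` is a localization of `C` at the class of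
morphisms inverted by `F : C ⥤ P` (with `P` a poset), `G : D ⥤ P` satisfies `L ⋙ G ≅ F`,
and `S ⊆ P` is ord-connected (locally closed), then the functor induced by `L` from the
full subcategory `C_S` to the full subcategory `D_S` is a localization of `C_S` at the
class of morphisms inverted by `F`. -/
theorem localization_restrict_to_locally_closed_subposet
    {C : Type*} [Category C] {D : Type*} [Category D]
    {P : Type*} [PartialOrder P]
    (F : C ⥤ P) (L : C ⥤ D) (G : D ⥤ P)
    (hL : L.IsLocalization (fun _ _ f => IsIso (F.map f)))
    (e : L ⋙ G ≅ F)
    (S : Set P) (hS : S.OrdConnected) :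
    (ObjectProperty.lift (fun Y : D => G.obj Y ∈ S)
        (ObjectProperty.ι (fun X : C => F.obj X ∈ S) ⋙ L)
        (fun X => by
          have h : G.obj (L.obj X.obj) = F.obj X.obj :=
            le_antisymm (leOfHom (e.hom.app X.obj)) (leOfHom (e.inv.app X.obj))
          show G.obj (L.obj X.obj) ∈ S
          rw [h]
          exact X.property)).IsLocalization
      (fun _ _ f => IsIso
        (F.map ((ObjectProperty.ι (fun X : C => F.obj X ∈ S)).map f))) :=
  (hS.isLocallyClosedIn_upperClosure.inverseImage G).isLocalization_lift L
    (fun _ _ f => IsIso (F.map f)) _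
    fun X => iff_of_eq (congrArg (· ∈ S) (e.app X).to_eq.symm)
end

section
/- Let P be a poset regarded as a category, let F : C ⥤ P be a functor from a small category, and let Z ⊆ P be a lower set. Let ι : C_Z ⥤ C be the inclusion of the full subcategory of objects X with F.obj X ∈ Z. Then for every functor G : C_Z ⥤ Type and every object c of C with F.obj c ∉ Z, the value at c of the pointwise right Kan extension of G along ι is a terminal type (i.e., it is equivalent to PUnit). -/
open CategoryTheory Limits

namespace CategoryTheory

noncomputable def Functor.isTerminalRanObjObjOfIsEmpty {A C H : Type*} [Category* A]
    [Category* C] [Category* H] (L : A ⥤ C) [∀ G : A ⥤ H, L.HasRightKanExtension G]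
    (G : A ⥤ H) [L.HasPointwiseRightKanExtension G] (c : C) [IsEmpty (StructuredArrow c L)] :
    IsTerminal ((L.ran.obj G).obj c) :=
  isLimitEquivIsTerminalOfIsEmpty H _ (L.isPointwiseRightKanExtensionRanCounit G c)

theorem isEmpty_structuredArrow_ι_of_notMem {C P : Type*} [Category* C] [PartialOrder P]
    (F : C ⥤ P) {Z : Set P} (hZ : IsLowerSet Z) {c : C} (hc : F.obj c ∉ Z) :
    IsEmpty (StructuredArrow c (ObjectProperty.ι (fun X : C => F.obj X ∈ Z))) :=
  ⟨fun f => hc (hZ (leOfHom (F.map f.hom)) f.right.property)⟩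

end CategoryTheory

/-- Let `F : C ⥤ P` be a functor from a small category to a poset and `Z ⊆ P` a lower set
(a closed subset of the Alexandroff upper-set topology). For every `G : C_Z ⥤ Type` and
every `c : C` with `F.obj c ∉ Z`, the value at `c` of the (pointwise) right Kan extension
of `G` along the full inclusion `ι : C_Z ⥤ C` is a terminal type, i.e. equivalent to `PUnit`. -/
theorem ran_along_closed_part_is_terminal_off_Z
    {C : Type} [SmallCategory C] {P : Type} [PartialOrder P]
    (F : C ⥤ P) (Z : Set P) (hZ : IsLowerSet Z)
    (G : ObjectProperty.FullSubcategory (fun X : C => F.obj X ∈ Z) ⥤ Type)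
    (c : C) (hc : F.obj c ∉ Z) :
    Nonempty
      ((((ObjectProperty.ι (fun X : C => F.obj X ∈ Z)).ran.obj G).obj c) ≃ PUnit) := by
  have := isEmpty_structuredArrow_ι_of_notMem F hZ hc
  have := Types.isTerminalEquivUnique _ ((ObjectProperty.ι _).isTerminalRanObjObjOfIsEmpty G c)
  exact ⟨Equiv.ofUnique _ _⟩
end

section
/- Let P be a poset regarded as a category, let F : C ⥤ P be a functor from a small category, and let U ⊆ P be an upper set. Let ι : C_U ⥤ C be the inclusion of the full subcategory of objects X with F.obj X ∈ U. Then for every functor G : C_U ⥤ Type and every object c of C with F.obj c ∉ U, the value at c of the pointwise left Kan extension of G along ι is an empty type (an initial object of Type). -/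
open CategoryTheory Limits

/-!
The value of the pointwise left Kan extension `ι.lan G` at `c` is a colimit indexed by the
arrows `ι X ⟶ c`. An arrow `X ⟶ c` gives `F.obj X ≤ F.obj c`, so `F.obj X ∈ U` would force
`F.obj c ∈ U` because `U` is an upper set. Off `U` the indexing category is therefore empty, and
the colimit is the initial object, which in `Type` is an empty type.
-/

namespace CategoryTheory.Functor

variable {A B H : Type*} [Category* A] [Category* B] [Category* H]

noncomputable def isInitialLanObjOfIsEmpty (L : A ⥤ B) [∀ F : A ⥤ H, L.HasLeftKanExtension F]
    (F : A ⥤ H) [L.HasPointwiseLeftKanExtension F] (c : B) [IsEmpty (CostructuredArrow L c)] :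
    IsInitial ((L.lan.obj F).obj c) :=
  isColimitEquivIsInitialOfIsEmpty H _ <|
    isPointwiseLeftKanExtensionOfIsLeftKanExtension (F := F) _ (L.lanUnit.app F) c

end CategoryTheory.Functor

theorem isEmpty_costructuredArrow_ι_of_not_mem {C P : Type*} [Category* C] [Preorder P]
    (F : C ⥤ P) {U : Set P} (hU : IsUpperSet U) {c : C} (hc : F.obj c ∉ U) :
    IsEmpty (CostructuredArrow (ObjectProperty.ι fun X : C => F.obj X ∈ U) c) :=
  ⟨fun f => hc (hU (leOfHom (F.map f.hom)) f.left.property)⟩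

/-- Let `F : C ⥤ P` be a functor from a small category to a poset and `U ⊆ P` an upper set
(an open subset of the Alexandroff upper-set topology). For every `G : C_U ⥤ Type` and
every `c : C` with `F.obj c ∉ U`, the value at `c` of the (pointwise) left Kan extension
of `G` along the full inclusion `ι : C_U ⥤ C` is an empty type (an initial object of `Type`). -/
theorem lan_along_open_part_is_empty_off_U
    {C : Type} [SmallCategory C] {P : Type} [PartialOrder P]
    (F : C ⥤ P) (U : Set P) (hU : IsUpperSet U)
    (G : ObjectProperty.FullSubcategory (fun X : C => F.obj X ∈ U) ⥤ Type)
    (c : C) (hc : F.obj c ∉ U) :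
    IsEmpty (((ObjectProperty.ι (fun X : C => F.obj X ∈ U)).lan.obj G).obj c) := by
  have := isEmpty_costructuredArrow_ι_of_not_mem F hU hc
  exact (Types.initial_iff_empty _).1 ⟨Functor.isInitialLanObjOfIsEmpty _ G c⟩
end

section
/- Let P be a poset regarded as a category, let F : C ⥤ P be a functor from a small category, and let U ⊆ P be an upper set, with ι : C_U ⥤ C the inclusion of the full subcategory of objects X with F.obj X ∈ U. Then the left Kan extension functor (C_U ⥤ Type) ⥤ (C ⥤ Type) along ι is fully faithful, and a functor H : C ⥤ Type lies in its essential image if and only if H.obj c is empty for every object c of C with F.obj c ∉ U. -/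
/-!
The left Kan extension along a fully faithful functor `L` is fully faithful, and its value at
`c` is the colimit over `CostructuredArrow L c`. When every `c` either lies in the essential
image of `L` or receives no arrow from it, the counit of `lan ⊣ restriction` is therefore an
isomorphism at `H` exactly when `H` is empty away from the image of `L`. For the inclusion of
`C_U` with `U` an upper set, an arrow `X ⟶ c` with `F.obj X ∈ U` forces `F.obj c ∈ U`, so every
object is of one of the two kinds.
-/

open CategoryTheory Limits

universe u

namespace CategoryTheory.Functor

section

variable {A C H : Type*} [Category* A] [Category* C] [Category* H] (L : A ⥤ C) [L.Full]
  [L.Faithful] [∀ G : A ⥤ H, L.HasPointwiseLeftKanExtension G]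

lemma isIso_lanAdjunction_counit_app_app_of_mem_essImage (G : C ⥤ H) {c : C}
    (hc : L.essImage c) : IsIso (((L.lanAdjunction H).counit.app G).app c) := by
  obtain ⟨a, ⟨e⟩⟩ := hc
  rw [← NatTrans.isIso_app_iff_of_iso _ e]
  exact IsIso.of_isIso_fac_left (L.lanUnit_app_app_lanAdjunction_counit_app_app G a)

end

variable {A C : Type u} [SmallCategory A] [SmallCategory C] (L : A ⥤ C)

lemma isEmpty_lan_obj_obj_of_isEmpty_costructuredArrow (G : A ⥤ Type u) {c : C}
    [IsEmpty (CostructuredArrow L c)] : IsEmpty ((L.lan.obj G).obj c) :=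
  (Types.initial_iff_empty _).mp
    ⟨isColimitEquivIsInitialOfIsEmpty _ _ (L.isPointwiseLeftKanExtensionLeftKanExtensionUnit G c)⟩

theorem lan_essImage_iff [L.Full] [L.Faithful]
    (hL : ∀ c, L.essImage c ∨ IsEmpty (CostructuredArrow L c)) (G : C ⥤ Type u) :
    L.lan.essImage G ↔ ∀ c, IsEmpty (CostructuredArrow L c) → IsEmpty (G.obj c) := by
  constructor
  · rintro ⟨G₀, ⟨e⟩⟩ c hc
    exact (e.app c).toEquiv.isEmpty_congr.mp (L.isEmpty_lan_obj_obj_of_isEmpty_costructuredArrow G₀)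
  · intro hG
    have : ∀ c, IsIso (((L.lanAdjunction (Type u)).counit.app G).app c) := fun c ↦ by
      rcases hL c with hc | hc
      · exact L.isIso_lanAdjunction_counit_app_app_of_mem_essImage G hc
      · have hsource := L.isEmpty_lan_obj_obj_of_isEmpty_costructuredArrow (L ⋙ G) (c := c)
        rw [isIso_iff_bijective]
        exact ⟨fun x ↦ hsource.elim x, fun y ↦ (hG c hc).elim y⟩
    have : IsIso ((L.lanAdjunction (Type u)).counit.app G) := NatIso.isIso_of_isIso_app _
    exact (L.lanAdjunction (Type u)).mem_essImage_of_counit_isIso G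

end CategoryTheory.Functor

lemma isEmpty_costructuredArrow_ι_iff_not_mem {C P : Type*} [Category* C] [Preorder P]
    (F : C ⥤ P) {U : Set P} (hU : IsUpperSet U) (c : C) :
    IsEmpty (CostructuredArrow (ObjectProperty.ι fun X : C ↦ F.obj X ∈ U) c) ↔ F.obj c ∉ U := by
  refine ⟨fun h hc ↦ h.false (CostructuredArrow.mk (Y := (⟨c, hc⟩ : ObjectProperty.FullSubcategory _)) (𝟙 _)), fun hc ↦ ⟨fun f ↦ ?_⟩⟩
  exact hc (hU (leOfHom (F.map f.hom)) f.left.property)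

/-- Let `F : C ⥤ P` be a functor from a small category to a poset and `U ⊆ P` an upper set.
The left Kan extension functor `(C_U ⥤ Type) ⥤ (C ⥤ Type)` along the full inclusion
`ι : C_U ⥤ C` is fully faithful, and `H : C ⥤ Type` lies in its essential image if and
only if `H.obj c` is empty for every `c` with `F.obj c ∉ U`. -/
theorem lan_along_open_part_fullyFaithful_and_essImage
    {C : Type} [SmallCategory C] {P : Type} [PartialOrder P]
    (F : C ⥤ P) (U : Set P) (hU : IsUpperSet U) :
    ((ObjectProperty.ι (fun X : C => F.obj X ∈ U)).lan :
        (ObjectProperty.FullSubcategory (fun X : C => F.obj X ∈ U) ⥤ Type) ⥤ (C ⥤ Type)).Full ∧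
    ((ObjectProperty.ι (fun X : C => F.obj X ∈ U)).lan :
        (ObjectProperty.FullSubcategory (fun X : C => F.obj X ∈ U) ⥤ Type) ⥤ (C ⥤ Type)).Faithful ∧
    (∀ H : C ⥤ Type,
      ((ObjectProperty.ι (fun X : C => F.obj X ∈ U)).lan :
          (ObjectProperty.FullSubcategory (fun X : C => F.obj X ∈ U) ⥤ Type) ⥤ (C ⥤ Type)).essImage H ↔
        ∀ c : C, F.obj c ∉ U → IsEmpty (H.obj c)) := by
  set L := ObjectProperty.ι fun X : C => F.obj X ∈ U
  have hff : L.lan.FullyFaithful := (L.lanAdjunction Type).fullyFaithfulLOfIsIsoUnit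
  have hL : ∀ c, L.essImage c ∨ IsEmpty (CostructuredArrow L c) := fun c ↦ by
    by_cases hc : F.obj c ∈ U
    · exact .inl ⟨⟨c, hc⟩, ⟨Iso.refl _⟩⟩
    · exact .inr ((isEmpty_costructuredArrow_ι_iff_not_mem F hU c).mpr hc)
  refine ⟨hff.full, hff.faithful, fun H ↦ ?_⟩
  simp only [L.lan_essImage_iff hL, isEmpty_costructuredArrow_ι_iff_not_mem F hU, L]
end

section
/- Let L : C ⥤ D be a localization of C at a class of morphisms W. If c is an initial object of C, then L.obj c is an initial object of D. -/
/-!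
An object `X` is initial exactly when there is a natural transformation `π : const X ⟶ 𝟭`
with `π.app X = 𝟙 X`: naturality of `π` along any `f : X ⟶ Y` forces `f = π.app Y`.
Since precomposition with a localization functor `L` is fully faithful on functor categories,
the whiskered transformation `L ⋙ const (L X) ⟶ L ⋙ 𝟭` descends to such a `π'` for `L.obj X`.
-/

open CategoryTheory Functor

namespace CategoryTheory.Limits

variable {C : Type*} [Category C]

def IsInitial.ofNatTransConst {X : C} (π : (const C).obj X ⟶ 𝟭 C) (hπ : π.app X = 𝟙 X) :
    IsInitial X :=
  IsInitial.ofUniqueHom π.app fun Y f => by simpa [hπ] using (π.naturality f).symm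

def IsInitial.natTransConst {X : C} (hX : IsInitial X) : (const C).obj X ⟶ 𝟭 C where
  app := hX.to

theorem IsInitial.natTransConst_app_self {X : C} (hX : IsInitial X) :
    hX.natTransConst.app X = 𝟙 X :=
  hX.to_self

end CategoryTheory.Limits

namespace CategoryTheory.Localization

theorem exists_natTrans_const_app_obj_eq_id {C D : Type*} [Category C] [Category D] (L : C ⥤ D)
    (W : MorphismProperty C) [L.IsLocalization W] {X : C} (π : (const C).obj X ⟶ 𝟭 C)
    (hπ : π.app X = 𝟙 X) :
    ∃ π' : (const D).obj (L.obj X) ⟶ 𝟭 D, π'.app (L.obj X) = 𝟙 (L.obj X) := by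
  let τ : L ⋙ (const D).obj (L.obj X) ⟶ L ⋙ 𝟭 D := (constComp C X L).inv ≫ whiskerRight π L
  refine ⟨(fullyFaithfulWhiskeringLeft L W D).preimage τ, ?_⟩
  simpa [τ, hπ] using congr_app ((fullyFaithfulWhiskeringLeft L W D).map_preimage τ) X

end CategoryTheory.Localization

/-- Localization functors preserve initial objects. -/
theorem localization_preserves_initial
    {C : Type*} [Category C] {D : Type*} [Category D]
    (L : C ⥤ D) (W : MorphismProperty C) [L.IsLocalization W]
    (c : C) (hc : Limits.IsInitial c) :
    Nonempty (Limits.IsInitial (L.obj c)) :=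
  let ⟨π, hπ⟩ := Localization.exists_natTrans_const_app_obj_eq_id L W hc.natTransConst
    hc.natTransConst_app_self
  ⟨.ofNatTransConst π hπ⟩
end

section
/- Let P be a partial order equipped with a topology in which the open sets are exactly the upper sets (the Alexandroff topology). Then a subset S ⊆ P is locally closed if and only if S is ord-connected, i.e., an interval: for all p, q ∈ S and all x with p ≤ x ≤ q, one has x ∈ S. -/
namespace Topology.IsUpperSet

variable {P : Type*} [Preorder P] [TopologicalSpace P] [Topology.IsUpperSet P] {S : Set P}

theorem ordConnected_of_isLocallyClosed (hS : IsLocallyClosed S) : S.OrdConnected := by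
  obtain ⟨U, Z, hU, hZ, rfl⟩ := hS
  exact (isOpen_iff_isUpperSet.1 hU).ordConnected.inter (isClosed_iff_isLower.1 hZ).ordConnected

theorem isLocallyClosed_of_ordConnected (hS : S.OrdConnected) : IsLocallyClosed S :=
  ⟨upperClosure S, lowerClosure S, isOpen_iff_isUpperSet.2 (upperClosure S).upper,
    isClosed_iff_isLower.2 (lowerClosure S).lower, hS.upperClosure_inter_lowerClosure.symm⟩

end Topology.IsUpperSet

/-- In a poset equipped with the Alexandroff topology (open sets = upper sets),
a subset is locally closed if and only if it is ord-connected (an interval). -/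
theorem isLocallyClosed_iff_ordConnected
    {P : Type*} [PartialOrder P] [TopologicalSpace P] [Topology.IsUpperSet P]
    (S : Set P) :
    IsLocallyClosed S ↔ S.OrdConnected :=
  ⟨Topology.IsUpperSet.ordConnected_of_isLocallyClosed,
    Topology.IsUpperSet.isLocallyClosed_of_ordConnected⟩
end

section
/- Let F : C ⥤ D be a functor between small categories, and let F_! : (C ⥤ Type) ⥤ (D ⥤ Type) denote the left Kan extension functor along F (the left adjoint to precomposition with F). Then F is fully faithful if and only if F_! is fully faithful. -/
/-!
Since `F_! ⊣ F^*`, the functor `F_!` is fully faithful iff the unit `η : P ⟶ F^* F_! P` is an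
isomorphism. When `F` is fully faithful this holds because a pointwise left Kan extension along a
fully faithful functor restricts back to the original functor. Conversely, at the corepresentable
`P = C(c, -)` naturality gives `η f = F_! P (F f) u` with `u = η (𝟙 c)`, and the transpose of
`F.map : C(c, -) ⟶ D(F c, F -)` sends `F_! P g u` back to `g`. Hence `η` being injective (resp.
surjective) at `C(c, -)` makes `F` faithful (resp. full).
-/

universe v u₁ u₂

namespace CategoryTheory

variable {C : Type u₁} [Category.{v} C] {D : Type u₂} [Category.{v} D]

def Functor.coyonedaMap (F : C ⥤ D) (c : C) :
    coyoneda.obj (.op c) ⟶ F ⋙ coyoneda.obj (.op (F.obj c)) where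
  app _ := TypeCat.ofHom F.map
  naturality _ _ _ := by ext; simp

namespace Adjunction

variable {F : C ⥤ D} {L : (C ⥤ Type v) ⥤ (D ⥤ Type v)}
  (adj : L ⊣ (Functor.whiskeringLeft C D (Type v)).obj F)

abbrev unitElement (c : C) : (L.obj (coyoneda.obj (.op c))).obj (F.obj c) :=
  (adj.unit.app (coyoneda.obj (.op c))).app c (𝟙 c)

lemma unit_app_coyoneda_apply {c c' : C} (f : c ⟶ c') :
    (adj.unit.app (coyoneda.obj (.op c))).app c' f =
      (L.obj (coyoneda.obj (.op c))).map (F.map f) (adj.unitElement c) := by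
  simpa using NatTrans.naturality_apply (adj.unit.app (coyoneda.obj (.op c))) f (𝟙 c)

lemma injective_map_unitElement (c c' : C) :
    Function.Injective fun g : F.obj c ⟶ F.obj c' =>
      (L.obj (coyoneda.obj (.op c))).map g (adj.unitElement c) := by
  let α := (adj.homEquiv _ _).symm (F.coyonedaMap c)
  have unit_comp_α : adj.unit.app _ ≫ ((Functor.whiskeringLeft C D (Type v)).obj F).map α =
      F.coyonedaMap c :=
    (adj.homEquiv_unit _ _ α).symm.trans ((adj.homEquiv _ _).apply_symm_apply _)
  have α_unitElement : α.app _ (adj.unitElement c) = 𝟙 (F.obj c) := by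
    simpa [Functor.coyonedaMap] using
      ConcreteCategory.congr_hom (NatTrans.congr_app unit_comp_α c) (𝟙 c)
  refine Function.LeftInverse.injective (g := α.app (F.obj c')) fun g => ?_
  simp [NatTrans.naturality_apply, α_unitElement]

lemma injective_unit_app_coyoneda_app [Mono adj.unit] (c c' : C) :
    Function.Injective ((adj.unit.app (coyoneda.obj (.op c))).app c') := by
  rw [← mono_iff_injective]
  infer_instance

lemma surjective_unit_app_coyoneda_app [Epi adj.unit] (c c' : C) :
    Function.Surjective ((adj.unit.app (coyoneda.obj (.op c))).app c') := by
  rw [← epi_iff_surjective]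
  infer_instance

include adj in
lemma faithful_of_mono_unit [Mono adj.unit] : F.Faithful where
  map_injective {c c'} f g hfg := adj.injective_unit_app_coyoneda_app c c' <| by
    rw [unit_app_coyoneda_apply, unit_app_coyoneda_apply, hfg]

include adj in
lemma full_of_epi_unit [Epi adj.unit] : F.Full where
  map_surjective {c c'} g := by
    obtain ⟨f, hf⟩ := adj.surjective_unit_app_coyoneda_app c c'
      ((L.obj (coyoneda.obj (.op c))).map g (adj.unitElement c))
    rw [unit_app_coyoneda_apply] at hf
    exact ⟨f, adj.injective_map_unitElement c c' hf⟩

end Adjunction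

end CategoryTheory

open CategoryTheory

/-- A functor `F : C ⥤ D` between small categories is fully faithful if and only if the
left Kan extension functor `F_! : (C ⥤ Type) ⥤ (D ⥤ Type)` along `F` is fully faithful. -/
theorem fullyFaithful_iff_lan_fullyFaithful
    {C D : Type} [SmallCategory C] [SmallCategory D] (F : C ⥤ D) :
    (F.Full ∧ F.Faithful) ↔
      ((F.lan : (C ⥤ Type) ⥤ (D ⥤ Type)).Full ∧
        (F.lan : (C ⥤ Type) ⥤ (D ⥤ Type)).Faithful) := by
  let adj := F.lanAdjunction Type
  constructor
  · rintro ⟨_, _⟩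
    exact ⟨adj.fullyFaithfulLOfIsIsoUnit.full, adj.fullyFaithfulLOfIsIsoUnit.faithful⟩
  · rintro ⟨_, _⟩
    exact ⟨adj.full_of_epi_unit, adj.faithful_of_mono_unit⟩
end
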